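/- arXiv:1205.4473 — 6 statements merged into one kernel-verified Lean document; each statement's English description precedes it below -/
import Mathlib

section
/- Let A be an abelian category with enough injectives and let (W, F) be a complete cotorsion pair in A such that W ∩ F equals the class of injective objects of A and such that Ext^k(W, F) = 0 for all W ∈ W, F ∈ F and all k ≥ 1. Then W satisfies the 2-out-of-3 property: for every short exact sequence 0 → W1 → W2 → W3 → 0 in A, if two of the three terms belong to W then so does the third. -/
open CategoryTheory CategoryTheory.Limits CategoryTheory.Abelian

universe w v u

variable {C : Type u} [Category.{v} C] [Abelian C]

/-- `f : X ⟶ Y` and `g : Y ⟶ Z` form a short exact sequence `0 → X → Y → Z → 0`. -/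
def IsShortExactSeq {X Y Z : C} (f : X ⟶ Y) (g : Y ⟶ Z) : Prop :=
  ∃ zero : f ≫ g = 0, (ShortComplex.mk f g zero).ShortExact

/-- `(D, E)` is a cotorsion pair: each class is the `Ext¹`-orthogonal of the other. -/
def IsCotorsionPair [HasExt.{w} C] (D E : Set C) : Prop :=
  (∀ X : C, X ∈ D ↔ ∀ Y ∈ E, Subsingleton (Ext.{w} X Y 1)) ∧
  (∀ Y : C, Y ∈ E ↔ ∀ X ∈ D, Subsingleton (Ext.{w} X Y 1))

/-- `(D, E)` is a complete cotorsion pair: it is a cotorsion pair with enough projectives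
(`0 → Y → X → Z → 0` with `X ∈ D`, `Y ∈ E`) and enough injectives
(`0 → Z → Y → X → 0` with `Y ∈ E`, `X ∈ D`). -/
def IsCompleteCotorsionPair [HasExt.{w} C] (D E : Set C) : Prop :=
  IsCotorsionPair.{w} D E ∧
  (∀ Z : C, ∃ (X Y : C) (f : Y ⟶ X) (g : X ⟶ Z), IsShortExactSeq f g ∧ X ∈ D ∧ Y ∈ E) ∧
  (∀ Z : C, ∃ (Y X : C) (f : Z ⟶ Y) (g : Y ⟶ X), IsShortExactSeq f g ∧ Y ∈ E ∧ X ∈ D)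

lemma subsingleton_ext_of_forall_eq_zero [HasExt.{w} C] {X Y : C} {n : ℕ}
    (h : ∀ x : Ext.{w} X Y n, x = 0) : Subsingleton (Ext.{w} X Y n) :=
  ⟨fun a b => by rw [h a, h b]⟩

/-- Extension closure of the `Ext¹(-,T)`-vanishing class. -/
lemma aux_ext₂ [HasExt.{w} C] {S : ShortComplex C} (hS : S.ShortExact) (T : C)
    (h1 : Subsingleton (Ext.{w} S.X₁ T 1)) (h3 : Subsingleton (Ext.{w} S.X₃ T 1)) :
    Subsingleton (Ext.{w} S.X₂ T 1) := by
  apply subsingleton_ext_of_forall_eq_zero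
  intro x
  obtain ⟨y, hy⟩ := Ext.contravariant_sequence_exact₂ hS T x (Subsingleton.elim _ 0)
  rw [← hy, Subsingleton.elim y 0, Ext.comp_zero]

/-- Closure under kernels of epis of the `Ext¹(-,T)`-vanishing class,
assuming the vanishing of `Ext²` of the quotient. -/
lemma aux_ext₁ [HasExt.{w} C] {S : ShortComplex C} (hS : S.ShortExact) (T : C)
    (h2 : Subsingleton (Ext.{w} S.X₂ T 1)) (h3 : Subsingleton (Ext.{w} S.X₃ T 2)) :
    Subsingleton (Ext.{w} S.X₁ T 1) := by
  apply subsingleton_ext_of_forall_eq_zero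
  intro x
  obtain ⟨x₂, hx₂⟩ := Ext.contravariant_sequence_exact₁ hS T x rfl (Subsingleton.elim _ 0)
  rw [← hx₂, Subsingleton.elim x₂ 0, Ext.comp_zero]

/-- Pulling back a short exact sequence: the kernel of the second projection. -/
lemma ses_pullback_snd {X₁ X₂ X₃ B : C} {f : X₁ ⟶ X₂} {g : X₂ ⟶ X₃}
    (hz : f ≫ g = 0) (hse : (ShortComplex.mk f g hz).ShortExact) (φ : B ⟶ X₃) :
    IsShortExactSeq
      (pullback.lift f 0 (by rw [hz, zero_comp]) : X₁ ⟶ pullback g φ)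
      (pullback.snd g φ) := by
  haveI : Mono f := hse.mono_f
  haveI : Epi g := hse.epi_g
  have hzero : (pullback.lift f 0 (by rw [hz, zero_comp]) : X₁ ⟶ pullback g φ) ≫
      pullback.snd g φ = 0 := pullback.lift_snd _ _ _
  refine ⟨hzero, ?_⟩
  have hfst : (pullback.lift f 0 (by rw [hz, zero_comp]) : X₁ ⟶ pullback g φ) ≫
      pullback.fst g φ = f := pullback.lift_fst _ _ _
  haveI : Mono (pullback.lift f 0 (by rw [hz, zero_comp]) : X₁ ⟶ pullback g φ) :=
    mono_of_mono_fac hfst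
  exact
    { exact := ShortComplex.exact_of_f_is_kernel _
        (KernelFork.IsLimit.ofι' _ hzero (fun k hk => by
          have hk' : (k ≫ pullback.fst g φ) ≫ g = 0 := by
            rw [Category.assoc, pullback.condition, ← Category.assoc, hk, zero_comp]
          refine ⟨hse.exact.lift (k ≫ pullback.fst g φ) hk', ?_⟩
          apply pullback.hom_ext
          · rw [Category.assoc, hfst]
            exact hse.exact.lift_f _ _
          · rw [Category.assoc, hzero, comp_zero, hk])) }

/-- Pulling back a short exact sequence: the kernel of the first projection. -/
lemma ses_pullback_fst {X₁ X₂ X₃ B : C} {f : X₁ ⟶ X₂} {g : X₂ ⟶ X₃}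
    (hz : f ≫ g = 0) (hse : (ShortComplex.mk f g hz).ShortExact) (φ : B ⟶ X₃) :
    IsShortExactSeq
      (pullback.lift 0 f (by rw [hz, zero_comp]) : X₁ ⟶ pullback φ g)
      (pullback.fst φ g) := by
  haveI : Mono f := hse.mono_f
  haveI : Epi g := hse.epi_g
  have hzero : (pullback.lift 0 f (by rw [hz, zero_comp]) : X₁ ⟶ pullback φ g) ≫
      pullback.fst φ g = 0 := pullback.lift_fst _ _ _
  refine ⟨hzero, ?_⟩
  have hsnd : (pullback.lift 0 f (by rw [hz, zero_comp]) : X₁ ⟶ pullback φ g) ≫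
      pullback.snd φ g = f := pullback.lift_snd _ _ _
  haveI : Mono (pullback.lift 0 f (by rw [hz, zero_comp]) : X₁ ⟶ pullback φ g) :=
    mono_of_mono_fac hsnd
  exact
    { exact := ShortComplex.exact_of_f_is_kernel _
        (KernelFork.IsLimit.ofι' _ hzero (fun k hk => by
          have hk' : (k ≫ pullback.snd φ g) ≫ g = 0 := by
            rw [Category.assoc, ← pullback.condition, ← Category.assoc, hk, zero_comp]
          refine ⟨hse.exact.lift (k ≫ pullback.snd φ g) hk', ?_⟩
          apply pullback.hom_ext
          · rw [Category.assoc, hzero, comp_zero, hk]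
          · rw [Category.assoc, hsnd]
            exact hse.exact.lift_f _ _)) }

/-- Let `(W, F)` be a complete cotorsion pair in an abelian category with
enough injectives such that `W ∩ F` is the class of injectives and `Ext^k(W, F) = 0` for
all `k ≥ 1`. Then `W` satisfies the 2-out-of-3 property for short exact sequences. -/
theorem stmt1 [EnoughInjectives C] [HasExt.{w} C] (W F : Set C)
    (hpair : IsCompleteCotorsionPair.{w} W F)
    (hWF : W ∩ F = {X : C | Injective X})
    (hext : ∀ w ∈ W, ∀ f ∈ F, ∀ k : ℕ, 1 ≤ k → Subsingleton (Ext.{w} w f k)) :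
    ∀ ⦃W₁ W₂ W₃ : C⦄ (f : W₁ ⟶ W₂) (g : W₂ ⟶ W₃), IsShortExactSeq f g →
      ((W₁ ∈ W ∧ W₂ ∈ W) ∨ (W₁ ∈ W ∧ W₃ ∈ W) ∨ (W₂ ∈ W ∧ W₃ ∈ W)) →
      (W₁ ∈ W ∧ W₂ ∈ W ∧ W₃ ∈ W) := by
  intro W₁ W₂ W₃ f g hse htwo
  have hD := hpair.1.1
  obtain ⟨hz, hS⟩ := hse
  rcases htwo with ⟨h1, h2⟩ | ⟨h1, h3⟩ | ⟨h2, h3⟩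
  · -- the hard case : `W₁, W₂ ∈ W ⇒ W₃ ∈ W`
    refine ⟨h1, h2, ?_⟩
    obtain ⟨X, Y, f', g', hse', hX, hY⟩ := hpair.2.1 W₃
    obtain ⟨hz', hS'⟩ := id hse'
    haveI : Mono f' := hS'.mono_f
    -- the two short exact sequences associated to the pullback of `g` and `g'`
    obtain ⟨hzA, hA⟩ := ses_pullback_fst hz hS g'
    obtain ⟨hzB, hB⟩ := ses_pullback_snd hz' hS' g
    -- the pullback belongs to `W`
    have hP : pullback g' g ∈ W := (hD _).2 (fun T hT =>
      aux_ext₂ hA T ((hD _).1 h1 T hT) ((hD _).1 hX T hT))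
    -- hence `Y` belongs to `W`, so it is injective
    have hYW : Y ∈ W := (hD _).2 (fun T hT =>
      aux_ext₁ hB T ((hD _).1 hP T hT) (hext W₂ h2 T hT 2 (by norm_num)))
    have hYinj : Injective Y := by
      have : Y ∈ W ∩ F := ⟨hYW, hY⟩
      rwa [hWF] at this
    -- since `Y` is injective, the sequence `0 → Y → X → W₃ → 0` has trivial `extClass`
    have hcls : hS'.extClass = 0 := by
      have hfac : f' ≫ Injective.factorThru (𝟙 Y) f' = 𝟙 Y := Injective.comp_factorThru _ _
      calc hS'.extClass = hS'.extClass.comp (Ext.mk₀ (𝟙 Y)) (add_zero 1) :=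
            (Ext.comp_mk₀_id _).symm
        _ = hS'.extClass.comp ((Ext.mk₀ f').comp
              (Ext.mk₀ (Injective.factorThru (𝟙 Y) f')) (zero_add 0)) (add_zero 1) := by
            rw [Ext.mk₀_comp_mk₀, hfac]
        _ = (hS'.extClass.comp (Ext.mk₀ f') (add_zero 1)).comp
              (Ext.mk₀ (Injective.factorThru (𝟙 Y) f')) (add_zero 1) := by
            rw [Ext.comp_assoc _ _ _ (add_zero 1) (zero_add 0) (add_zero 1)]
        _ = 0 := by rw [hS'.extClass_comp, Ext.zero_comp]
    -- conclude using the contravariant long exact sequence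
    refine (hD W₃).2 (fun T hT => ?_)
    apply subsingleton_ext_of_forall_eq_zero
    intro x
    have hx : (Ext.mk₀ g').comp x (zero_add 1) = 0 := by
      haveI := (hD X).1 hX T hT
      exact Subsingleton.elim _ 0
    obtain ⟨x₁, hx₁⟩ := Ext.contravariant_sequence_exact₃ hS' T x hx (n₀ := 0) rfl
    rw [← hx₁, hcls, Ext.zero_comp]
  · -- extension closure : `W₁, W₃ ∈ W ⇒ W₂ ∈ W`
    exact ⟨h1, (hD W₂).2 (fun T hT =>
      aux_ext₂ hS T ((hD _).1 h1 T hT) ((hD _).1 h3 T hT)), h3⟩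
  · -- kernels of epis : `W₂, W₃ ∈ W ⇒ W₁ ∈ W`
    exact ⟨(hD W₁).2 (fun T hT =>
      aux_ext₁ hS T ((hD _).1 h2 T hT) (hext W₃ h3 T hT 2 (by norm_num))), h2, h3⟩
end

section
/- Let (X, Y) be a complete coresolving cotorsion pair in an abelian category A and set ω := X ∩ Y. Then for every object A of A one has: A ∈ X if and only if every morphism f : A → Y with Y ∈ Y factors through some object of ω. -/
open CategoryTheory CategoryTheory.Limits CategoryTheory.Abelian

universe w v u

variable {C : Type u} [Category.{v} C] [Abelian C]

/-- A cotorsion pair `(D, E)` is coresolving if `E` is closed under cokernels of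
monomorphisms. -/
def IsCoresolving (E : Set C) : Prop :=
  ∀ ⦃E₁ E₂ Z : C⦄ (f : E₁ ⟶ E₂) (g : E₂ ⟶ Z),
    IsShortExactSeq f g → E₁ ∈ E → E₂ ∈ E → Z ∈ E

/-- A morphism factors through some object of the class `ω`. -/
def FactorsThroughClass (ω : Set C) {A B : C} (f : A ⟶ B) : Prop :=
  ∃ (I : C) (u : A ⟶ I) (v : I ⟶ B), I ∈ ω ∧ u ≫ v = f

/-! If `A ∈ X`, the sequence `0 → A → Y₀ → X₀ → 0` given by completeness has `Y₀ ∈ X ∩ Y`, since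
`X` is closed under extensions, and every `A ⟶ Y'` with `Y' ∈ Y` extends along `A ⟶ Y₀` because
`Ext¹(X₀, Y') = 0`.

Conversely, take `0 → Y₁ → X₁ → A → 0` and a monomorphism `X₁ ⟶ Y₂` as given by completeness.
As `Y` is coresolving, `Q := Y₂ / Y₁` lies in `Y`, so the induced map `A ⟶ Q` factors through
some `W ∈ X`; since `Ext¹(W, Y₁) = 0`, it then lifts to `A ⟶ Y₂`. Comparing this lift with
`X₁ ⟶ Y₂` produces a retraction of `Y₁ ⟶ X₁`, so `A` is a retract of `X₁ ∈ X`. -/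

namespace CategoryTheory.Abelian.Ext

variable [HasExt.{w} C]

lemma subsingleton_of_shortExact {S : ShortComplex C} (hS : S.ShortExact) {Y : C} {n : ℕ}
    (h₁ : Subsingleton (Ext.{w} S.X₁ Y n)) (h₃ : Subsingleton (Ext.{w} S.X₃ Y n)) :
    Subsingleton (Ext.{w} S.X₂ Y n) := by
  refine subsingleton_of_forall_eq 0 fun x => ?_
  obtain ⟨x₃, rfl⟩ := contravariant_sequence_exact₂ hS Y x (h₁.elim _ _)
  rw [h₃.elim x₃ 0, comp_zero]

lemma subsingleton_of_retract {A B : C} (e : Retract A B) {Y : C} {n : ℕ}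
    (h : Subsingleton (Ext.{w} B Y n)) : Subsingleton (Ext.{w} A Y n) := by
  refine subsingleton_of_forall_eq 0 fun x => ?_
  rw [← mk₀_id_comp x, ← e.retract, ← mk₀_comp_mk₀_assoc,
    h.elim ((mk₀ e.r).comp x (zero_add n)) 0, comp_zero]

end CategoryTheory.Abelian.Ext

namespace CategoryTheory.ShortComplex

lemma exists_extension_of_lift {S T : ShortComplex C}
    (hT : T.Exact) [Mono T.f] (i : S.X₁ ⟶ T.X₁) (m : S.X₂ ⟶ T.X₂) (hm : S.f ≫ m = i ≫ T.f)
    (g : S.X₃ ⟶ T.X₂) (hg : S.g ≫ g ≫ T.g = m ≫ T.g) :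
    ∃ r : S.X₂ ⟶ T.X₁, S.f ≫ r = i := by
  refine ⟨hT.lift (m - S.g ≫ g) (by simp [hg]), ?_⟩
  rw [← cancel_mono T.f]
  simp [hm]

variable [HasExt.{w} C] {S : ShortComplex C}

open Abelian

lemma ShortExact.exists_lift_of_subsingleton_ext (hS : S.ShortExact) {W : C}
    (v : W ⟶ S.X₃) (hext : Subsingleton (Ext.{w} W S.X₁ 1)) :
    ∃ l : W ⟶ S.X₂, l ≫ S.g = v := by
  obtain ⟨x, hx⟩ := Ext.covariant_sequence_exact₃ W hS (Ext.mk₀ v) (zero_add 1) (hext.elim _ _)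
  refine ⟨Ext.homEquiv₀ x, (Ext.mk₀_bijective _ _).1 ?_⟩
  rw [← Ext.mk₀_comp_mk₀, Ext.mk₀_homEquiv₀_apply, hx]

lemma ShortExact.exists_extension_of_subsingleton_ext (hS : S.ShortExact) {M : C}
    (f : S.X₁ ⟶ M) (hext : Subsingleton (Ext.{w} S.X₃ M 1)) :
    ∃ h : S.X₂ ⟶ M, S.f ≫ h = f := by
  obtain ⟨x, hx⟩ :=
    Ext.contravariant_sequence_exact₁ hS M (Ext.mk₀ f) (add_zero 1) (hext.elim _ _)
  refine ⟨Ext.homEquiv₀ x, (Ext.mk₀_bijective _ _).1 ?_⟩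
  rw [← Ext.mk₀_comp_mk₀, Ext.mk₀_homEquiv₀_apply, hx]

end CategoryTheory.ShortComplex

namespace IsCotorsionPair

variable [HasExt.{w} C] {D E : Set C}

lemma subsingleton_ext (hp : IsCotorsionPair.{w} D E) {X Y : C} (hX : X ∈ D) (hY : Y ∈ E) :
    Subsingleton (Ext.{w} X Y 1) :=
  (hp.1 X).1 hX Y hY

lemma mem_left_of_shortExact (hp : IsCotorsionPair.{w} D E) {S : ShortComplex C}
    (hS : S.ShortExact) (h₁ : S.X₁ ∈ D) (h₃ : S.X₃ ∈ D) : S.X₂ ∈ D :=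
  (hp.1 _).2 fun _ hY =>
    Ext.subsingleton_of_shortExact hS (hp.subsingleton_ext h₁ hY) (hp.subsingleton_ext h₃ hY)

lemma mem_left_of_retract (hp : IsCotorsionPair.{w} D E) {A B : C} (e : Retract A B)
    (hB : B ∈ D) : A ∈ D :=
  (hp.1 _).2 fun _ hY => Ext.subsingleton_of_retract e (hp.subsingleton_ext hB hY)

end IsCotorsionPair

namespace IsCompleteCotorsionPair

variable [HasExt.{w} C] {D E : Set C}

lemma factorsThroughClass_of_mem_left (hp : IsCompleteCotorsionPair.{w} D E) {A : C}
    (hA : A ∈ D) {Y : C} (hY : Y ∈ E) (f : A ⟶ Y) : FactorsThroughClass (D ∩ E) f := by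
  obtain ⟨Y₀, X₀, i, _, ⟨_, hS⟩, hY₀, hX₀⟩ := hp.2.2 A
  obtain ⟨h, hh⟩ := hS.exists_extension_of_subsingleton_ext f (hp.1.subsingleton_ext hX₀ hY)
  exact ⟨Y₀, i, h, ⟨hp.1.mem_left_of_shortExact hS hA hX₀, hY₀⟩, hh⟩

lemma mem_left_of_forall_factorsThroughClass (hp : IsCompleteCotorsionPair.{w} D E)
    (hcores : IsCoresolving E) {A : C}
    (hA : ∀ Y ∈ E, ∀ f : A ⟶ Y, FactorsThroughClass D f) : A ∈ D := by
  obtain ⟨X₁, Y₁, j, π, ⟨hjπ, hS⟩, hX₁, hY₁⟩ := hp.2.1 A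
  obtain ⟨Y₂, _, m, _, ⟨_, hm⟩, hY₂, -⟩ := hp.2.2 X₁
  have : Mono j := hS.mono_f
  have : Epi π := hS.epi_g
  have : Mono m := hm.mono_f
  let T := ShortComplex.mk (j ≫ m) (cokernel.π (j ≫ m)) (cokernel.condition _)
  have hT : T.ShortExact := { exact := ShortComplex.exact_cokernel _ }
  have hQ : T.X₃ ∈ E := hcores _ _ ⟨_, hT⟩ hY₁ hY₂
  let ι : A ⟶ T.X₃ := hS.exact.desc (m ≫ T.g) ((Category.assoc _ _ _).symm.trans T.zero)
  have hι : π ≫ ι = m ≫ T.g := hS.exact.g_desc _ _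
  obtain ⟨W, u, v, hW, huv⟩ := hA _ hQ ι
  obtain ⟨v', hv'⟩ := hT.exists_lift_of_subsingleton_ext v (hp.1.subsingleton_ext hW hY₁)
  obtain ⟨r, hr⟩ := ShortComplex.exists_extension_of_lift (S := .mk j π hjπ) hT.exact (𝟙 Y₁) m
    (by simp [T]) (u ≫ v') (by simp [hv', huv, hι])
  exact hp.1.mem_left_of_retract
    ⟨_, _, (ShortComplex.Splitting.ofExactOfRetraction _ hS.exact r hr hS.epi_g).s_g⟩ hX₁

end IsCompleteCotorsionPair

/-- Let `(X, Y)` be a complete coresolving cotorsion pair and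
`ω := X ∩ Y`. Then `A ∈ X` iff every morphism `A ⟶ Y` with `Y ∈ Y` factors through `ω`. -/
theorem stmt2 [HasExt.{w} C] (X Y : Set C)
    (hpair : IsCompleteCotorsionPair.{w} X Y) (hcores : IsCoresolving Y) (A : C) :
    A ∈ X ↔ ∀ (Y' : C), Y' ∈ Y → ∀ f : A ⟶ Y', FactorsThroughClass (X ∩ Y) f :=
  ⟨fun hA _ hY' f => hpair.factorsThroughClass_of_mem_left hA hY' f,
    fun h => hpair.mem_left_of_forall_factorsThroughClass hcores fun Y' hY' f =>
      let ⟨I, u, v, hI, huv⟩ := h Y' hY' f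
      ⟨I, u, v, hI.1, huv⟩⟩
end

section
/- A complete cotorsion pair (D, E) in an abelian category A is coresolving if and only if it is resolving; that is, E is closed under cokernels of monomorphisms if and only if D is closed under kernels of epimorphisms. -/
open CategoryTheory CategoryTheory.Limits CategoryTheory.Abelian

universe w v u

variable {C : Type u} [Category.{v} C] [Abelian C]

lemma ext_eq_zero_of_subsingleton {X Y : C} [HasExt.{w} C] {n : ℕ}
    (h : Subsingleton (Ext.{w} X Y n)) (x : Ext.{w} X Y n) : x = 0 :=
  h.elim x 0

/-- coresolving → resolving -/
lemma aux_forward [HasExt.{w} C] (D E : Set C) (hpair : IsCompleteCotorsionPair.{w} D E)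
    (hcor : ∀ ⦃E₁ E₂ Z : C⦄ (f : E₁ ⟶ E₂) (g : E₂ ⟶ Z),
        IsShortExactSeq f g → E₁ ∈ E → E₂ ∈ E → Z ∈ E) :
    ∀ ⦃K D₁ D₂ : C⦄ (f : K ⟶ D₁) (g : D₁ ⟶ D₂),
        IsShortExactSeq f g → D₁ ∈ D → D₂ ∈ D → K ∈ D := by
  obtain ⟨⟨hD, hE⟩, comp1, comp2⟩ := hpair
  intro K D₁ D₂ f g hT hD₁ hD₂
  obtain ⟨zT, hT⟩ := hT
  rw [hD]
  intro Y hY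
  refine subsingleton_of_forall_eq 0 (fun ξ => ?_)
  -- Step 1: approximation of K : 0 → Y' → X' → K → 0
  obtain ⟨X', Y', f₁, g₁, ⟨z₁, hV⟩, hX', hY'⟩ := comp1 K
  have h1 : (Ext.mk₀ g₁).comp ξ (zero_add 1) = 0 :=
    ext_eq_zero_of_subsingleton ((hD X').mp hX' Y hY) _
  obtain ⟨φ, hφ⟩ := Ext.contravariant_sequence_exact₃ hV Y ξ h1 (n₀ := 0) rfl
  -- Step 2: embed X' into some Y₁ ∈ E; let Q = coker (Y' → Y₁)
  obtain ⟨Y₁, X₁, j, g₂, ⟨z₂, hW'⟩, hY₁, hX₁⟩ := comp2 X'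
  haveI : Mono f₁ := hV.mono_f
  haveI : Mono j := hW'.mono_f
  set i : Y' ⟶ Y₁ := f₁ ≫ j with hi
  have hWz : i ≫ cokernel.π i = 0 := cokernel.condition i
  have hW : (ShortComplex.mk i (cokernel.π i) hWz).ShortExact :=
    { exact := ShortComplex.exact_cokernel i }
  have hQ : cokernel i ∈ E := hcor i (cokernel.π i) ⟨hWz, hW⟩ hY' hY₁
  -- εV kills i
  have h2 : hV.extClass.comp (Ext.mk₀ i) (add_zero 1) = 0 := by
    rw [hi, ← Ext.mk₀_comp_mk₀, ← Ext.comp_assoc_of_second_deg_zero,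
      hV.extClass_comp, Ext.zero_comp]
  obtain ⟨π₀, hπ₀⟩ := Ext.covariant_sequence_exact₁ K hW hV.extClass h2 (n₀ := 0) rfl
  -- Step 3: lift π₀ : Ext K (cokernel i) 0 through f
  have h3 : hT.extClass.comp π₀ (add_zero 1) = 0 :=
    ext_eq_zero_of_subsingleton ((hD D₂).mp hD₂ _ hQ) _
  obtain ⟨x₂, hx₂⟩ := Ext.contravariant_sequence_exact₁ hT (cokernel i) π₀ rfl h3
  -- Step 4: conclude
  have h4 : x₂.comp (hW.extClass.comp φ (add_zero 1)) (zero_add 1) = 0 :=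
    ext_eq_zero_of_subsingleton ((hD D₁).mp hD₁ Y hY) _
  calc ξ = hV.extClass.comp φ (add_zero 1) := hφ.symm
    _ = (π₀.comp hW.extClass (zero_add 1)).comp φ (add_zero 1) := by rw [hπ₀]
    _ = π₀.comp (hW.extClass.comp φ (add_zero 1)) (zero_add 1) := by
        rw [Ext.comp_assoc_of_third_deg_zero]
    _ = ((Ext.mk₀ f).comp x₂ (zero_add 0)).comp
          (hW.extClass.comp φ (add_zero 1)) (zero_add 1) := by rw [hx₂]
    _ = (Ext.mk₀ f).comp (x₂.comp (hW.extClass.comp φ (add_zero 1)) (zero_add 1))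
          (zero_add 1) := by
        rw [Ext.comp_assoc _ _ _ (zero_add 0) (zero_add 1) (by omega)]
    _ = 0 := by rw [h4, Ext.comp_zero]

/-- resolving → coresolving -/
lemma aux_backward [HasExt.{w} C] (D E : Set C) (hpair : IsCompleteCotorsionPair.{w} D E)
    (hres : ∀ ⦃K D₁ D₂ : C⦄ (f : K ⟶ D₁) (g : D₁ ⟶ D₂),
        IsShortExactSeq f g → D₁ ∈ D → D₂ ∈ D → K ∈ D) :
    ∀ ⦃E₁ E₂ Z : C⦄ (f : E₁ ⟶ E₂) (g : E₂ ⟶ Z),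
        IsShortExactSeq f g → E₁ ∈ E → E₂ ∈ E → Z ∈ E := by
  obtain ⟨⟨hD, hE⟩, comp1, comp2⟩ := hpair
  intro E₁ E₂ Z f g hS hE₁ hE₂
  obtain ⟨zS, hS⟩ := hS
  rw [hE]
  intro X hX
  refine subsingleton_of_forall_eq 0 (fun ξ => ?_)
  -- Step 1: coapproximation of Z : 0 → Z → Y' → X' → 0
  obtain ⟨Y', X', fV, gV, ⟨zV, hV⟩, hY', hX'⟩ := comp2 Z
  have h1 : ξ.comp (Ext.mk₀ fV) (add_zero 1) = 0 :=
    ext_eq_zero_of_subsingleton ((hE Y').mp hY' X hX) _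
  obtain ⟨φ, hφ⟩ := Ext.covariant_sequence_exact₁ X hV ξ h1 (n₀ := 0) rfl
  -- Step 2: cover Y' by some X₁ ∈ D; let K = ker (X₁ → X')
  obtain ⟨X₁, Y₁, fW', gW', ⟨zW', hW'⟩, hX₁, hY₁⟩ := comp1 Y'
  haveI : Epi gV := hV.epi_g
  haveI : Epi gW' := hW'.epi_g
  set q : X₁ ⟶ X' := gW' ≫ gV with hq
  have hWz : kernel.ι q ≫ q = 0 := kernel.condition q
  have hW : (ShortComplex.mk (kernel.ι q) q hWz).ShortExact :=
    { exact := ShortComplex.exact_kernel q }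
  have hK : kernel q ∈ D := hres (kernel.ι q) q ⟨hWz, hW⟩ hX₁ hX'
  -- q kills εV
  have h2 : (Ext.mk₀ q).comp hV.extClass (zero_add 1) = 0 := by
    rw [hq, ← Ext.mk₀_comp_mk₀_assoc, hV.comp_extClass, Ext.comp_zero]
  obtain ⟨π₀, hπ₀⟩ := Ext.contravariant_sequence_exact₃ hW Z hV.extClass h2 (n₀ := 0) rfl
  -- Step 3: lift π₀ : Ext (kernel q) Z 0 through g
  have h3 : π₀.comp hS.extClass (zero_add 1) = 0 :=
    ext_eq_zero_of_subsingleton ((hE E₁).mp hE₁ _ hK) _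
  obtain ⟨x₂, hx₂⟩ := Ext.covariant_sequence_exact₃ (kernel q) hS π₀ rfl h3
  -- Step 4: conclude
  have h4 : (φ.comp hW.extClass (zero_add 1)).comp x₂ (add_zero 1) = 0 :=
    ext_eq_zero_of_subsingleton ((hE E₂).mp hE₂ X hX) _
  calc ξ = φ.comp hV.extClass (zero_add 1) := hφ.symm
    _ = φ.comp (hW.extClass.comp π₀ (add_zero 1)) (zero_add 1) := by rw [hπ₀]
    _ = φ.comp (hW.extClass.comp (x₂.comp (Ext.mk₀ g) (add_zero 0)) (add_zero 1))
          (zero_add 1) := by rw [hx₂]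
    _ = ((φ.comp hW.extClass (zero_add 1)).comp x₂ (add_zero 1)).comp (Ext.mk₀ g)
          (add_zero 1) := by
        rw [← Ext.comp_assoc hW.extClass x₂ (Ext.mk₀ g) (add_zero 1) (add_zero 0)
            (by omega),
          ← Ext.comp_assoc φ (hW.extClass.comp x₂ (add_zero 1)) (Ext.mk₀ g) (zero_add 1)
            (add_zero 1) (by omega),
          ← Ext.comp_assoc φ hW.extClass x₂ (zero_add 1) (add_zero 1) (by omega)]
    _ = 0 := by rw [h4, Ext.zero_comp]

/-- A complete cotorsion pair `(D, E)` is coresolving (`E` is closed under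
cokernels of monomorphisms) iff it is resolving (`D` is closed under kernels of
epimorphisms). -/
theorem stmt4 [HasExt.{w} C] (D E : Set C) (hpair : IsCompleteCotorsionPair.{w} D E) :
    (∀ ⦃E₁ E₂ Z : C⦄ (f : E₁ ⟶ E₂) (g : E₂ ⟶ Z),
        IsShortExactSeq f g → E₁ ∈ E → E₂ ∈ E → Z ∈ E) ↔
    (∀ ⦃K D₁ D₂ : C⦄ (f : K ⟶ D₁) (g : D₁ ⟶ D₂),
        IsShortExactSeq f g → D₁ ∈ D → D₂ ∈ D → K ∈ D) :=
  ⟨aux_forward D E hpair, aux_backward D E hpair⟩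
end

section
/- Let A be an abelian category and (W, F) a coresolving cotorsion pair in A having enough injectives, i.e. for every object Z there is a short exact sequence 0 → Z → F → W → 0 with F ∈ F and W ∈ W. Then for every short exact sequence 0 → X1 → X2 → X3 → 0 in A there exists a commutative 3×3 diagram with exact rows and exact columns whose first row is 0 → X1 → X2 → X3 → 0, whose second row is a short exact sequence 0 → A1 → A2 → A3 → 0 with A1, A2, A3 ∈ F, whose third row is a short exact sequence 0 → B1 → B2 → B3 → 0 with B1, B2, B3 ∈ W, and whose i-th column is a short exact sequence 0 → Xi → Ai → Bi → 0 for i = 1, 2, 3. -/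
open CategoryTheory CategoryTheory.Limits CategoryTheory.Abelian

universe w v u

variable {C : Type u} [Category.{v} C] [Abelian C]

section Aux

open CategoryTheory.Abelian.Pseudoelement

attribute [local instance] CategoryTheory.Abelian.Pseudoelement.objectToSort
  CategoryTheory.Abelian.Pseudoelement.homToFun

/-- A mono together with its cokernel projection forms a short exact sequence. -/
lemma ses_mono_cokernel {X Y : C} (u : X ⟶ Y) [Mono u] :
    IsShortExactSeq u (cokernel.π u) := by
  refine ⟨cokernel.condition u, ?_⟩
  exact ShortComplex.ShortExact.mk'
    (ShortComplex.exact_of_g_is_cokernel _ (cokernelIsCokernel u))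
    inferInstance inferInstance

/-- Given two composable monos `u : X ⟶ Y`, `v : Y ⟶ Z`, with cokernels `r : Y ⟶ R` and
`s : Z ⟶ S`, there is a short exact sequence `0 → R → coker (u ≫ v) → S → 0`. -/
lemma ses_two_monos {X Y Z R S : C} (u : X ⟶ Y) (v : Y ⟶ Z) [Mono u] [Mono v]
    {r : Y ⟶ R} {s : Z ⟶ S} (wu : u ≫ r = 0) (wv : v ≫ s = 0)
    (hu : (ShortComplex.mk u r wu).ShortExact) (hv : (ShortComplex.mk v s wv).ShortExact) :
    ∃ ρ : R ⟶ cokernel (u ≫ v),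
      r ≫ ρ = v ≫ cokernel.π (u ≫ v) ∧
      IsShortExactSeq ρ (cokernel.desc (u ≫ v) s
        (by rw [Category.assoc, wv, comp_zero])) := by
  haveI : Epi (ShortComplex.mk u r wu).g := hu.epi_g
  haveI : Epi (ShortComplex.mk v s wv).g := hv.epi_g
  haveI hre : Epi r := hu.epi_g
  haveI hse : Epi s := hv.epi_g
  have h0 : u ≫ (v ≫ cokernel.π (u ≫ v)) = 0 := by
    rw [← Category.assoc]; exact cokernel.condition (u ≫ v)
  set ρ : R ⟶ cokernel (u ≫ v) := hu.exact.desc (v ≫ cokernel.π (u ≫ v)) h0 with hρdef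
  have hρ : r ≫ ρ = v ≫ cokernel.π (u ≫ v) := hu.exact.g_desc _ _
  set σ : cokernel (u ≫ v) ⟶ S := cokernel.desc (u ≫ v) s
    (by rw [Category.assoc, wv, comp_zero]) with hσdef
  have hπσ : cokernel.π (u ≫ v) ≫ σ = s := cokernel.π_desc _ _ _
  have hρσ : ρ ≫ σ = 0 := by
    rw [← cancel_epi r, ← Category.assoc, hρ, Category.assoc, hπσ, wv, comp_zero]
  -- the short exact sequence `0 → X → Z → coker (u ≫ v) → 0`
  obtain ⟨wuv, huv⟩ := ses_mono_cokernel (u ≫ v)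
  -- mono
  haveI monoρ : Mono ρ := by
    apply mono_of_zero_of_map_zero
    intro a ha
    obtain ⟨y, hy⟩ := pseudo_surjective_of_epi r a
    have h1 : (cokernel.π (u ≫ v)) (v y) = 0 := by
      calc (cokernel.π (u ≫ v)) (v y) = (v ≫ cokernel.π (u ≫ v)) y := by
            rw [Pseudoelement.comp_apply]
        _ = (r ≫ ρ) y := by rw [hρ]
        _ = ρ a := by rw [Pseudoelement.comp_apply, hy]
        _ = 0 := ha
    obtain ⟨x, hx⟩ := pseudo_exact_of_exact huv.exact (v y) h1
    have hvinj := pseudo_injective_of_mono v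
    have hux : u x = y := by
      apply hvinj
      calc v (u x) = (u ≫ v) x := by rw [Pseudoelement.comp_apply]
        _ = v y := hx
    calc a = r y := hy.symm
      _ = r (u x) := by rw [hux]
      _ = (u ≫ r) x := by rw [Pseudoelement.comp_apply]
      _ = (0 : X ⟶ R) x := by rw [wu]
      _ = 0 := zero_apply _ _
  -- epi
  haveI epiσ : Epi σ := epi_of_epi_fac hπσ
  -- exactness in the middle
  have hex : (ShortComplex.mk ρ σ hρσ).Exact := by
    apply exact_of_pseudo_exact
    intro b hb
    obtain ⟨z, hz⟩ := pseudo_surjective_of_epi (cokernel.π (u ≫ v)) b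
    have hsz : s z = 0 := by
      calc s z = (cokernel.π (u ≫ v) ≫ σ) z := by rw [hπσ]
        _ = σ ((cokernel.π (u ≫ v)) z) := Pseudoelement.comp_apply _ _ _
        _ = σ b := by rw [hz]
        _ = 0 := hb
    obtain ⟨y, hy⟩ := pseudo_exact_of_exact hv.exact z hsz
    refine ⟨r y, ?_⟩
    calc ρ (r y) = (r ≫ ρ) y := (Pseudoelement.comp_apply _ _ _).symm
      _ = (v ≫ cokernel.π (u ≫ v)) y := by rw [hρ]
      _ = (cokernel.π (u ≫ v)) (v y) := Pseudoelement.comp_apply _ _ _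
      _ = (cokernel.π (u ≫ v)) z := by rw [hy]
      _ = b := hz
  exact ⟨ρ, hρ, hρσ, ShortComplex.ShortExact.mk' hex monoρ epiσ⟩

/-- The cotorsion class `W` of a cotorsion pair is closed under extensions. -/
lemma memW_of_extension [HasExt.{w} C] {W F : Set C} (hpair : IsCotorsionPair.{w} W F)
    {B₁ B₂ B₃ : C} {fB : B₁ ⟶ B₂} {gB : B₂ ⟶ B₃} (h : IsShortExactSeq fB gB)
    (h₁ : B₁ ∈ W) (h₃ : B₃ ∈ W) : B₂ ∈ W := by
  obtain ⟨zero, hS⟩ := h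
  rw [hpair.1]
  intro Y hY
  have i₁ := (hpair.1 B₁).mp h₁ Y hY
  have i₃ := (hpair.1 B₃).mp h₃ Y hY
  have key : ∀ z : Ext.{w} B₂ Y 1, z = 0 := by
    intro z
    have hz : (Ext.mk₀ fB).comp z (zero_add 1) = 0 := Subsingleton.elim _ _
    obtain ⟨x₃, hx₃⟩ := Ext.contravariant_sequence_exact₂ hS Y z hz
    have hx₃0 : x₃ = 0 := Subsingleton.elim _ _
    rw [hx₃0] at hx₃
    rw [← hx₃, Ext.comp_zero]
  exact ⟨fun a b => by rw [key a, key b]⟩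

end Aux

/-- Let `(W, F)` be a coresolving cotorsion pair with enough injectives
(i.e. every `Z` embeds in a short exact sequence `0 → Z → F → W → 0` with `F ∈ F`,
`W ∈ W`). Then every short exact sequence `0 → X₁ → X₂ → X₃ → 0` extends to a
commutative 3×3 diagram with exact rows and columns, second row in `F`,
third row in `W`, and columns `0 → Xᵢ → Aᵢ → Bᵢ → 0`. -/
theorem stmt6 [HasExt.{w} C] (W F : Set C) (hpair : IsCotorsionPair.{w} W F)
    (hcores : ∀ ⦃E₁ E₂ Z : C⦄ (f : E₁ ⟶ E₂) (g : E₂ ⟶ Z),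
        IsShortExactSeq f g → E₁ ∈ F → E₂ ∈ F → Z ∈ F)
    (henough : ∀ Z : C, ∃ (Fo Wo : C) (f : Z ⟶ Fo) (g : Fo ⟶ Wo),
        IsShortExactSeq f g ∧ Fo ∈ F ∧ Wo ∈ W)
    {X₁ X₂ X₃ : C} (f : X₁ ⟶ X₂) (g : X₂ ⟶ X₃) (hfg : IsShortExactSeq f g) :
    ∃ (A₁ A₂ A₃ B₁ B₂ B₃ : C)
      (a₁ : X₁ ⟶ A₁) (a₂ : X₂ ⟶ A₂) (a₃ : X₃ ⟶ A₃)
      (fA : A₁ ⟶ A₂) (gA : A₂ ⟶ A₃)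
      (b₁ : A₁ ⟶ B₁) (b₂ : A₂ ⟶ B₂) (b₃ : A₃ ⟶ B₃)
      (fB : B₁ ⟶ B₂) (gB : B₂ ⟶ B₃),
      A₁ ∈ F ∧ A₂ ∈ F ∧ A₃ ∈ F ∧ B₁ ∈ W ∧ B₂ ∈ W ∧ B₃ ∈ W ∧
      IsShortExactSeq fA gA ∧ IsShortExactSeq fB gB ∧
      IsShortExactSeq a₁ b₁ ∧ IsShortExactSeq a₂ b₂ ∧ IsShortExactSeq a₃ b₃ ∧
      f ≫ a₂ = a₁ ≫ fA ∧ g ≫ a₃ = a₂ ≫ gA ∧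
      fA ≫ b₂ = b₁ ≫ fB ∧ gA ≫ b₃ = b₂ ≫ gB := by
  obtain ⟨wfg, hSfg⟩ := hfg
  haveI : Mono f := hSfg.mono_f
  haveI : Epi g := hSfg.epi_g
  haveI : Epi (ShortComplex.mk f g wfg).g := hSfg.epi_g
  obtain ⟨A₁, B₁, a₁, b₁, ⟨w₁, hS₁⟩, hA₁, hB₁⟩ := henough X₁
  haveI : Mono a₁ := hS₁.mono_f
  haveI : Epi b₁ := hS₁.epi_g
  haveI : Epi (ShortComplex.mk a₁ b₁ w₁).g := hS₁.epi_g
  -- the pushout `P` of `f` and `a₁`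
  let P := pushout f a₁
  let inl : X₂ ⟶ P := pushout.inl f a₁
  let inr : A₁ ⟶ P := pushout.inr f a₁
  haveI : Mono inl := Abelian.mono_pushout_of_mono_g f a₁
  haveI : Mono inr := Abelian.mono_pushout_of_mono_f f a₁
  have hcond : f ≫ inl = a₁ ≫ inr := pushout.condition
  -- the map `e : P ⟶ X₃` and the SES `0 → A₁ → P → X₃ → 0`
  let e : P ⟶ X₃ := pushout.desc g 0 (by rw [wfg, comp_zero])
  have hinle : inl ≫ e = g := pushout.inl_desc _ _ _
  have hinre : inr ≫ e = 0 := pushout.inr_desc _ _ _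
  haveI : Epi e := epi_of_epi_fac hinle
  have heColim : IsColimit (CokernelCofork.ofπ e hinre) := by
    refine CokernelCofork.IsColimit.ofπ e hinre
      (fun {T} k hk => hSfg.exact.desc (inl ≫ k)
        (by rw [← Category.assoc, hcond, Category.assoc, hk, comp_zero]))
      (fun {T} k hk => ?_) (fun {T} k hk m hm => ?_)
    · apply pushout.hom_ext
      · rw [← Category.assoc]
        show (inl ≫ e) ≫ _ = _
        rw [hinle]
        exact hSfg.exact.g_desc _ _
      · rw [← Category.assoc]
        show (inr ≫ e) ≫ _ = _
        rw [hinre, zero_comp, hk]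
    · rw [← cancel_epi e, hm]
      symm
      apply pushout.hom_ext
      · rw [← Category.assoc]
        show (inl ≫ e) ≫ _ = _
        rw [hinle]
        exact hSfg.exact.g_desc _ _
      · rw [← Category.assoc]
        show (inr ≫ e) ≫ _ = _
        rw [hinre, zero_comp, hk]
  have hSre : (ShortComplex.mk inr e hinre).ShortExact :=
    ShortComplex.ShortExact.mk'
      (ShortComplex.exact_of_g_is_cokernel _ heColim) inferInstance inferInstance
  -- the map `d : P ⟶ B₁` and the SES `0 → X₂ → P → B₁ → 0`
  let d : P ⟶ B₁ := pushout.desc 0 b₁ (by rw [comp_zero, w₁])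
  have hinld : inl ≫ d = 0 := pushout.inl_desc _ _ _
  have hinrd : inr ≫ d = b₁ := pushout.inr_desc _ _ _
  haveI : Epi d := epi_of_epi_fac hinrd
  have hdColim : IsColimit (CokernelCofork.ofπ d hinld) := by
    refine CokernelCofork.IsColimit.ofπ d hinld
      (fun {T} k hk => hS₁.exact.desc (inr ≫ k)
        (by rw [← Category.assoc, ← hcond, Category.assoc, hk, comp_zero]))
      (fun {T} k hk => ?_) (fun {T} k hk m hm => ?_)
    · apply pushout.hom_ext
      · rw [← Category.assoc]
        show (inl ≫ d) ≫ _ = _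
        rw [hinld, zero_comp, hk]
      · rw [← Category.assoc]
        show (inr ≫ d) ≫ _ = _
        rw [hinrd]
        exact hS₁.exact.g_desc _ _
    · rw [← cancel_epi d, hm]
      symm
      apply pushout.hom_ext
      · rw [← Category.assoc]
        show (inl ≫ d) ≫ _ = _
        rw [hinld, zero_comp, hk]
      · rw [← Category.assoc]
        show (inr ≫ d) ≫ _ = _
        rw [hinrd]
        exact hS₁.exact.g_desc _ _
  have hSld : (ShortComplex.mk inl d hinld).ShortExact :=
    ShortComplex.ShortExact.mk'
      (ShortComplex.exact_of_g_is_cokernel _ hdColim) inferInstance inferInstance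
  -- special preenvelope of `P`
  obtain ⟨A₂, W', p, q, ⟨w₂, hS₂⟩, hA₂, hW'⟩ := henough P
  haveI : Mono p := hS₂.mono_f
  -- second row: `0 → A₁ → A₂ → A₃ → 0`
  let fA : A₁ ⟶ A₂ := inr ≫ p
  let A₃ := cokernel fA
  let gA : A₂ ⟶ A₃ := cokernel.π fA
  have hrowA : IsShortExactSeq fA gA := ses_mono_cokernel fA
  -- third column: `0 → X₃ → A₃ → W' → 0`
  obtain ⟨a₃, ha₃comm, hcol₃⟩ := ses_two_monos inr p hinre w₂ hSre hS₂
  -- second column: `0 → X₂ → A₂ → B₂ → 0`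
  let a₂ : X₂ ⟶ A₂ := inl ≫ p
  let B₂ := cokernel a₂
  let b₂ : A₂ ⟶ B₂ := cokernel.π a₂
  have hcol₂ : IsShortExactSeq a₂ b₂ := ses_mono_cokernel a₂
  -- third row: `0 → B₁ → B₂ → W' → 0`
  obtain ⟨fB, hfBcomm, hrowB⟩ := ses_two_monos inl p hinld w₂ hSld hS₂
  refine ⟨A₁, A₂, A₃, B₁, B₂, W', a₁, a₂, a₃, fA, gA, b₁, b₂,
    cokernel.desc (inr ≫ p) q (by rw [Category.assoc, w₂, comp_zero]), fB,
    cokernel.desc (inl ≫ p) q (by rw [Category.assoc, w₂, comp_zero]),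
    hA₁, hA₂, ?_, hB₁, ?_, hW', hrowA, hrowB, ⟨w₁, hS₁⟩, hcol₂, hcol₃, ?_, ?_, ?_, ?_⟩
  · exact hcores fA gA hrowA hA₁ hA₂
  · exact memW_of_extension hpair hrowB hB₁ hW'
  · show f ≫ inl ≫ p = a₁ ≫ inr ≫ p
    rw [← Category.assoc, hcond, Category.assoc]
  · show g ≫ a₃ = (inl ≫ p) ≫ gA
    rw [← hinle, Category.assoc, ha₃comm, Category.assoc]
  · show (inr ≫ p) ≫ b₂ = b₁ ≫ fB
    rw [← hinrd]
    simp only [Category.assoc]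
    rw [hfBcomm]
  · show gA ≫ cokernel.desc (inr ≫ p) q _ = b₂ ≫ cokernel.desc (inl ≫ p) q _
    rw [cokernel.π_desc, cokernel.π_desc]
end

section
/- Let A be an abelian category with enough injectives, and let (W1, F1) and (W2, F2) be complete cotorsion pairs in A such that W1 and W2 are thick, W1 ∩ F1 and W2 ∩ F2 both equal the class of injective objects of A, and F2 ⊆ F1. Define W := {X | there exists a short exact sequence 0 → X → A → B → 0 with A ∈ F2 and B ∈ W1}. Then W ∩ F1 = F2 and W2 ∩ W = W1; in particular (W2 ∩ W, F1) and (W2, W ∩ F1) are complete cotorsion pairs. -/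
open CategoryTheory CategoryTheory.Limits CategoryTheory.Abelian

universe w v u

variable {C : Type u} [Category.{v} C] [Abelian C]

/-- A class of objects is thick: closed under direct summands and satisfying the
2-out-of-3 property for short exact sequences. -/
def IsThickClass (W : Set C) : Prop :=
  (∀ X Y : C, X ∈ W → (∃ (i : Y ⟶ X) (r : X ⟶ Y), i ≫ r = 𝟙 Y) → Y ∈ W) ∧
  (∀ ⦃X Y Z : C⦄ (f : X ⟶ Y) (g : Y ⟶ Z), IsShortExactSeq f g →
    ((X ∈ W ∧ Y ∈ W) ∨ (X ∈ W ∧ Z ∈ W) ∨ (Y ∈ W ∧ Z ∈ W)) → (X ∈ W ∧ Y ∈ W ∧ Z ∈ W))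

open ZeroObject in
/-- The identity short exact sequence `0 → X → X → 0 → 0`, with third term having
trivial `Ext` groups. -/
lemma isShortExactSeq_id_aux [HasExt.{w} C] (X : C) :
    ∃ (B : C) (g : X ⟶ B), IsShortExactSeq (𝟙 X) g ∧
      ∀ Y : C, Subsingleton (Ext.{w} B Y 1) := by
  refine ⟨0, 0, ⟨by simp, ShortComplex.Splitting.shortExact { r := 𝟙 X, s := 0 }⟩, ?_⟩
  intro Y
  constructor
  intro a b
  have h : ∀ e : Ext.{w} (0 : C) Y 1, e = 0 := by
    intro e
    rw [← Ext.mk₀_id_comp e, Limits.id_zero, Ext.mk₀_zero, Ext.zero_comp]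
  rw [h a, h b]

/-- The short exact sequence `0 → X → I(X) → coker → 0` given by enough injectives. -/
lemma isShortExactSeq_ι_aux [EnoughInjectives C] (X : C) :
    IsShortExactSeq (Injective.ι X) (cokernel.π (Injective.ι X)) :=
  ⟨by simp, ShortComplex.ShortExact.mk'
    (ShortComplex.exact_of_g_is_cokernel _ (cokernelIsCokernel _)) inferInstance inferInstance⟩

/-- Key lemma: if `0 → X → A → B → 0` is exact with `Ext¹(D, A) = 0` and `Ext¹(B, X) = 0`,
then `Ext¹(D, X) = 0`. -/
lemma subsingleton_ext_of_ses_aux [HasExt.{w} C] {X A B D : C} {f : X ⟶ A} {g : A ⟶ B}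
    (h : IsShortExactSeq f g)
    (h1 : Subsingleton (Ext.{w} D A 1)) (h2 : Subsingleton (Ext.{w} B X 1)) :
    Subsingleton (Ext.{w} D X 1) := by
  obtain ⟨zero, hS⟩ := h
  constructor
  intro a b
  have h : ∀ e : Ext.{w} D X 1, e = 0 := by
    intro e
    obtain ⟨x₃, hx₃⟩ := Ext.covariant_sequence_exact₁ D hS e (Subsingleton.elim _ _) rfl
    rw [← hx₃, Subsingleton.elim hS.extClass 0, Ext.comp_zero]
  rw [h a, h b]

/-- In the localization setup (complete cotorsion pairs `(W₁, F₁)`,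
`(W₂, F₂)`, both `Wᵢ` thick, `Wᵢ ∩ Fᵢ` the injectives, `F₂ ⊆ F₁`), letting
`W := {X | ∃ SES 0 → X → A → B → 0, A ∈ F₂, B ∈ W₁}`, one has `W ∩ F₁ = F₂` and
`W₂ ∩ W = W₁`; in particular `(W₂ ∩ W, F₁)` and `(W₂, W ∩ F₁)` are complete cotorsion
pairs. -/
theorem stmt8 [EnoughInjectives C] [HasExt.{w} C] (W₁ F₁ W₂ F₂ : Set C)
    (hpair₁ : IsCompleteCotorsionPair.{w} W₁ F₁)
    (hpair₂ : IsCompleteCotorsionPair.{w} W₂ F₂)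
    (hthick₁ : IsThickClass W₁) (hthick₂ : IsThickClass W₂)
    (hWF₁ : W₁ ∩ F₁ = {X : C | Injective X})
    (hWF₂ : W₂ ∩ F₂ = {X : C | Injective X})
    (hsub : F₂ ⊆ F₁)
    (W : Set C)
    (hW : W = {X : C | ∃ (A B : C) (f : X ⟶ A) (g : A ⟶ B),
        IsShortExactSeq f g ∧ A ∈ F₂ ∧ B ∈ W₁}) :
    W ∩ F₁ = F₂ ∧ W₂ ∩ W = W₁ ∧
    IsCompleteCotorsionPair.{w} (W₂ ∩ W) F₁ ∧
    IsCompleteCotorsionPair.{w} W₂ (W ∩ F₁) := by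
  -- W₁ ⊆ W₂
  have hW₁₂ : W₁ ⊆ W₂ := by
    intro X hX
    rw [hpair₂.1.1]
    intro Y hY
    exact (hpair₁.1.1 X).mp hX Y (hsub hY)
  -- F₂ ⊆ W
  have hF₂W : F₂ ⊆ W := by
    intro X hX
    rw [hW]
    obtain ⟨B, g, hse, hB⟩ := isShortExactSeq_id_aux.{w} X
    refine ⟨X, B, 𝟙 X, g, hse, hX, ?_⟩
    rw [hpair₁.1.1]
    intro Y _
    exact hB Y
  -- W ∩ F₁ ⊆ F₂
  have hWF₁F₂ : W ∩ F₁ ⊆ F₂ := by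
    rintro X ⟨hXW, hXF₁⟩
    rw [hW] at hXW
    obtain ⟨A, B, f, g, hse, hA, hB⟩ := hXW
    rw [hpair₂.1.2]
    intro D hD
    exact subsingleton_ext_of_ses_aux hse ((hpair₂.1.2 A).mp hA D hD)
      ((hpair₁.1.2 X).mp hXF₁ B hB)
  -- W₁ ⊆ W (via embedding into an injective)
  have hW₁W : W₁ ⊆ W := by
    intro X hX
    have hI : Injective.under X ∈ ({X : C | Injective X} : Set C) :=
      Injective.injective_under X
    have hIF₂ : Injective.under X ∈ F₂ := (hWF₂ ▸ hI).2
    have hIW₁ : Injective.under X ∈ W₁ := (hWF₁ ▸ hI).1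
    have hcoker : cokernel (Injective.ι X) ∈ W₁ :=
      (hthick₁.2 _ _ (isShortExactSeq_ι_aux X) (Or.inl ⟨hX, hIW₁⟩)).2.2
    rw [hW]
    exact ⟨_, _, Injective.ι X, cokernel.π _, isShortExactSeq_ι_aux X, hIF₂, hcoker⟩
  -- W₂ ∩ W ⊆ W₁
  have hW₂WW₁ : W₂ ∩ W ⊆ W₁ := by
    rintro X ⟨hXW₂, hXW⟩
    rw [hW] at hXW
    obtain ⟨A, B, f, g, hse, hA, hB⟩ := hXW
    have hAW₂ : A ∈ W₂ := (hthick₂.2 f g hse (Or.inr (Or.inl ⟨hXW₂, hW₁₂ hB⟩))).2.1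
    have hAInj : A ∈ ({X : C | Injective X} : Set C) := hWF₂ ▸ ⟨hAW₂, hA⟩
    have hAW₁ : A ∈ W₁ := (hWF₁ ▸ hAInj).1
    exact (hthick₁.2 f g hse (Or.inr (Or.inr ⟨hAW₁, hB⟩))).1
  have e₁ : W ∩ F₁ = F₂ :=
    Set.Subset.antisymm hWF₁F₂ (fun X hX => ⟨hF₂W hX, hsub hX⟩)
  have e₂ : W₂ ∩ W = W₁ :=
    Set.Subset.antisymm hW₂WW₁ (fun X hX => ⟨hW₁₂ hX, hW₁W hX⟩)
  refine ⟨e₁, e₂, ?_, ?_⟩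
  · rw [e₂]; exact hpair₁
  · rw [e₁]; exact hpair₂
end

section
/- Let A be a Grothendieck abelian category and T a monad on A whose underlying endofunctor preserves all small colimits. Then the Eilenberg–Moore category of T-algebras is a Grothendieck abelian category, and the forgetful functor from T-algebras to A preserves all small limits and all small colimits. -/
open CategoryTheory CategoryTheory.Limits

universe w w' v u

/-!
Since `T` preserves colimits, the forgetful functor `Algebra T ⥤ A` creates both limits and
colimits, so kernels, cokernels and filtered colimits of algebras are computed in `A`. It is
moreover conservative, so it detects that coimage-image comparisons of algebra maps are
isomorphisms, which makes `Algebra T` abelian, and exactness of filtered colimits in `A` is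
inherited by `Algebra T`. The free algebra on a separator of `A` is a separator, by the
free-forgetful adjunction and faithfulness of the forgetful functor.
-/

namespace CategoryTheory

noncomputable abbrev abelianOfReflectsIsomorphisms {C D : Type*} [Category* C] [Category* D]
    [Preadditive C] [HasFiniteProducts C] [HasKernels C] [HasCokernels C] [Abelian D]
    (F : C ⥤ D) [F.PreservesZeroMorphisms] [F.ReflectsIsomorphisms]
    [PreservesLimitsOfShape WalkingParallelPair F]
    [PreservesColimitsOfShape WalkingParallelPair F] : Abelian C :=
  have (X Y : C) (f : X ⟶ Y) : IsIso (Abelian.coimageImageComparison f) := by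
    have : IsIso (F.map (Abelian.coimageImageComparison f)) := by
      rw [Arrow.isIso_iff_isIso_of_isIso (Abelian.PreservesCoimageImageComparison.iso F f).hom]
      infer_instance
    exact isIso_of_reflects_iso _ F
  Abelian.ofCoimageImageComparisonIsIso

theorem isSeparator_leftAdjoint_obj {C D : Type*} [Category* C] [Category* D] {F : C ⥤ D}
    {G : D ⥤ C} (adj : F ⊣ G) [G.Faithful] {S : C} (hS : IsSeparator S) :
    IsSeparator (F.obj S) := by
  refine (isSeparator_def _).2 fun X Y f g hfg => G.map_injective (hS.def _ _ fun h => ?_)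
  simpa only [Adjunction.homEquiv_naturality_right, Equiv.apply_symm_apply] using
    congrArg (adj.homEquiv _ _) (hfg ((adj.homEquiv _ _).symm h))

namespace Monad

variable {C : Type*} [Category* C] (T : Monad C)

instance [HasFiniteLimits C] : HasFiniteLimits (Algebra T) :=
  ⟨fun _ _ _ => hasLimitsOfShape_of_hasLimitsOfShape_createsLimitsOfShape (forget T)⟩

instance {J : Type*} [Category* J] [HasColimitsOfShape J C]
    [PreservesColimitsOfShape J T.toFunctor] : HasColimitsOfShape J (Algebra T) :=
  hasColimitsOfShape_of_hasColimitsOfShape_createsColimitsOfShape (forget T)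

instance [HasColimitsOfSize.{w, w'} C] [PreservesColimitsOfSize.{w, w'} T.toFunctor] :
    HasColimitsOfSize.{w, w'} (Algebra T) :=
  ⟨fun _ _ => inferInstance⟩

noncomputable abbrev abelianAlgebra [Abelian C] [T.toFunctor.Additive]
    [PreservesColimitsOfShape WalkingParallelPair T.toFunctor] : Abelian (Algebra T) :=
  abelianOfReflectsIsomorphisms (forget T)

end Monad

end CategoryTheory

/-- Let `A` be a Grothendieck abelian category (abelian, cocomplete, AB5,
with a separator) and `T` a monad on `A` preserving all small colimits. Then the
Eilenberg–Moore category of `T`-algebras is a Grothendieck abelian category, and the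
forgetful functor preserves all small limits and colimits. -/
theorem stmt16 {A : Type u} [Category.{v} A] [Abelian A]
    [HasColimits A] [AB5 A] [HasSeparator A]
    (T : Monad A) [PreservesColimits T.toFunctor] :
    Nonempty (Abelian (Monad.Algebra T)) ∧
    HasColimits (Monad.Algebra T) ∧
    (∀ (J : Type v) [SmallCategory J] [IsFiltered J]
        [HasColimitsOfShape J (Monad.Algebra T)],
        PreservesFiniteLimits (colim (J := J) (C := Monad.Algebra T))) ∧
    HasSeparator (Monad.Algebra T) ∧
    PreservesLimits (Monad.forget T) ∧
    PreservesColimits (Monad.forget T) := by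
  have : T.toFunctor.Additive :=
    rightExactFunctor_le_additiveFunctor A A _ ((rightExactFunctor_iff _).2 inferInstance)
  refine ⟨⟨T.abelianAlgebra⟩, inferInstance, fun J _ _ _ => ?_,
    ⟨_, isSeparator_leftAdjoint_obj T.adj (isSeparator_separator A)⟩, inferInstance, inferInstance⟩
  exact (HasExactColimitsOfShape.domain_of_functor J (Monad.forget T)).preservesFiniteLimits
end
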